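/- arXiv:math/0205296 — 2 statements merged into one kernel-verified Lean document; each statement's English description precedes it below -/
import Mathlib

section
/- Let {M_n} be a nonnegative supermartingale of the form M_n^λ = exp(-3λ f(X_n) + λ δ (n ∧ T)) where T is a stopping time, f(X_T) ≤ 0 on {X_T · ℓ ≤ m}, f(X_0) ≥ 0, λ > 0, δ > 0. Then P(X_T · ℓ ≤ m) ≤ exp(-3λ f(X_0)). In particular, applied to Kalikow's chain on a truncated cone V_m starting at y ∈ V_m, with f(y) = y·ℓ - ζ|y||ℓ|, one gets P̂_{V_m}(X_{T_{V_m^c}} · ℓ ≤ m | X_0 = y) ≤ exp(-3λ f(y)). -/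
open MeasureTheory ProbabilityTheory

/-! Optional stopping at the bounded times `n ∧ T` together with Markov's inequality gives
`μ {M_T ≥ 1, T ≤ n} ≤ E[M_0]` for a nonnegative supermartingale `M`; letting `n → ∞` removes
`T ≤ n`. On `{X_T ⬝ ℓ ≤ m}` we have `f(X_T) ≤ 0`, so `M_T ≥ 1` there, while
`M_0 = exp(-3λ f(x₀))`. -/

namespace MeasureTheory.Supermartingale

variable {Ω : Type*} {m0 : MeasurableSpace Ω} {μ : Measure Ω} {𝒢 : Filtration ℕ m0}
  {M : ℕ → Ω → ℝ}

theorem integral_stoppedValue_le_integral_zero [IsFiniteMeasure μ]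
    (hM : Supermartingale M 𝒢 μ) {τ : Ω → WithTop ℕ} (hτ : IsStoppingTime 𝒢 τ) {N : ℕ}
    (hbdd : ∀ ω, τ ω ≤ N) :
    ∫ ω, stoppedValue M τ ω ∂μ ≤ ∫ ω, M 0 ω ∂μ := by
  have h := hM.neg.expected_stoppedValue_mono (isStoppingTime_const 𝒢 0) hτ
    (fun _ => zero_le) hbdd
  simp only [stoppedValue_const] at h
  change ∫ ω, -M 0 ω ∂μ ≤ ∫ ω, -stoppedValue M τ ω ∂μ at h
  rwa [integral_neg, integral_neg, neg_le_neg_iff] at h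

theorem measure_one_le_stoppedValue_le [IsFiniteMeasure μ]
    (hM : Supermartingale M 𝒢 μ) (hM_nonneg : ∀ n ω, 0 ≤ M n ω) {τ : Ω → WithTop ℕ}
    (hτ : IsStoppingTime 𝒢 τ) {N : ℕ} (hbdd : ∀ ω, τ ω ≤ N) :
    μ {ω | 1 ≤ stoppedValue M τ ω} ≤ ENNReal.ofReal (∫ ω, M 0 ω ∂μ) := by
  have hmarkov := mul_meas_ge_le_integral_of_nonneg
    (Filter.Eventually.of_forall fun ω => hM_nonneg _ ω)
    (integrable_stoppedValue ℕ hτ hM.integrable hbdd) 1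
  rw [one_mul, measureReal_def] at hmarkov
  rw [← ENNReal.ofReal_toReal (measure_ne_top μ _)]
  exact ENNReal.ofReal_le_ofReal
    (hmarkov.trans (hM.integral_stoppedValue_le_integral_zero hτ hbdd))

theorem measure_one_le_of_nat_stoppingTime_le [IsFiniteMeasure μ]
    (hM : Supermartingale M 𝒢 μ) (hM_nonneg : ∀ n ω, 0 ≤ M n ω) {T : Ω → ℕ}
    (hT : IsStoppingTime 𝒢 (fun ω => (T ω : WithTop ℕ))) :
    μ {ω | 1 ≤ M (T ω) ω} ≤ ENNReal.ofReal (∫ ω, M 0 ω ∂μ) := by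
  have hunion : {ω | 1 ≤ M (T ω) ω} = ⋃ n : ℕ, {ω | 1 ≤ M (T ω) ω ∧ T ω ≤ n} := by
    ext ω
    simp only [Set.mem_ofPred_eq, Set.mem_iUnion]
    exact ⟨fun h => ⟨T ω, h, le_rfl⟩, fun ⟨_, h, _⟩ => h⟩
  have hmono : Monotone fun n : ℕ => {ω | 1 ≤ M (T ω) ω ∧ T ω ≤ n} :=
    fun _ _ hab _ hω => ⟨hω.1, hω.2.trans hab⟩
  rw [hunion, hmono.measure_iUnion]
  refine iSup_le fun n => le_trans (measure_mono ?_)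
    (hM.measure_one_le_stoppedValue_le hM_nonneg ((isStoppingTime_const 𝒢 n).min hT)
      (N := n) fun ω => min_le_left _ _)
  rintro ω ⟨hω, hTn⟩
  simp only [stoppedValue, ENat.some_eq_natCast, Set.mem_ofPred_eq, Nat.cast_le, hTn,
    inf_of_le_right]
  exact hω

end MeasureTheory.Supermartingale

theorem statement9_general
    {Ω : Type*} {m0 : MeasurableSpace Ω} (μ : Measure Ω) [IsProbabilityMeasure μ]
    (𝒢 : Filtration ℕ m0)
    {d : ℕ} (X : ℕ → Ω → (Fin d → ℝ)) (f : (Fin d → ℝ) → ℝ)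
    (ℓ : Fin d → ℝ) (m : ℝ) (lam δ : ℝ) (hlam : 0 < lam) (hδ : 0 < δ)
    (T : Ω → ℕ) (hT : MeasureTheory.IsStoppingTime 𝒢 (fun ω => (T ω : WithTop ℕ)))
    (hsuper : Supermartingale
      (fun n ω => Real.exp (-(3 * lam) * f (X n ω) + lam * δ * (min n (T ω) : ℝ))) 𝒢 μ)
    (x₀ : Fin d → ℝ) (hX0 : ∀ ω, X 0 ω = x₀)
    (hbdry : ∀ ω, (∑ i, X (T ω) ω i * ℓ i) ≤ m → f (X (T ω) ω) ≤ 0) :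
    μ {ω | (∑ i, X (T ω) ω i * ℓ i) ≤ m} ≤ ENNReal.ofReal (Real.exp (-(3 * lam) * f x₀)) := by
  have hstopped : {ω | (∑ i, X (T ω) ω i * ℓ i) ≤ m} ⊆
      {ω | 1 ≤ Real.exp (-(3 * lam) * f (X (T ω) ω) + lam * δ * (min (T ω) (T ω) : ℝ))} := by
    intro ω hω
    exact Real.one_le_exp (add_nonneg
      (mul_nonneg_of_nonpos_of_nonpos (by linarith) (hbdry ω hω)) (by positivity))
  have hinitial : ∫ ω, Real.exp (-(3 * lam) * f (X 0 ω) + lam * δ * min ((0 : ℕ) : ℝ) (T ω)) ∂μ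
      = Real.exp (-(3 * lam) * f x₀) := by
    simp [hX0]
  rw [← hinitial]
  exact (measure_mono hstopped).trans
    (hsuper.measure_one_le_of_nat_stoppingTime_le (fun _ _ => (Real.exp_pos _).le) hT)

/-- Optional-stopping estimate: if `exp(-3λ f(X_n) + λδ (n ∧ T))` is a nonnegative
supermartingale, `T` a stopping time, `f(X_T) ≤ 0` on `{X_T ⬝ ℓ ≤ m}`, and
`X_0 ≡ x₀` with `f(x₀) ≥ 0`, then `P(X_T ⬝ ℓ ≤ m) ≤ exp(-3λ f(x₀))`. -/
theorem statement9
    {Ω : Type*} {m0 : MeasurableSpace Ω} (μ : Measure Ω) [IsProbabilityMeasure μ]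
    (𝒢 : Filtration ℕ m0)
    {d : ℕ} (X : ℕ → Ω → (Fin d → ℝ)) (f : (Fin d → ℝ) → ℝ)
    (ℓ : Fin d → ℝ) (m : ℝ) (lam δ : ℝ) (hlam : 0 < lam) (hδ : 0 < δ)
    (T : Ω → ℕ) (hT : MeasureTheory.IsStoppingTime 𝒢 (fun ω => (T ω : WithTop ℕ)))
    (hsuper : Supermartingale
      (fun n ω => Real.exp (-(3 * lam) * f (X n ω) + lam * δ * (min n (T ω) : ℝ))) 𝒢 μ)
    (x₀ : Fin d → ℝ) (hX0 : ∀ ω, X 0 ω = x₀) (hf0 : 0 ≤ f x₀)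
    (hbdry : ∀ ω, (∑ i, X (T ω) ω i * ℓ i) ≤ m → f (X (T ω) ω) ≤ 0) :
    μ {ω | (∑ i, X (T ω) ω i * ℓ i) ≤ m} ≤ ENNReal.ofReal (Real.exp (-(3 * lam) * f x₀)) :=
  statement9_general μ 𝒢 X f ℓ m lam δ hlam hδ T hT hsuper x₀ hX0 hbdry
end

section
/- Let δ ∈ (0, d⁺) where d⁺ > 0 and d⁻ > 0 are given. Let π̃(±|s) be single-site Ising conditional probabilities with parameters β ≥ 0, h > 0, and ω⁺, ω⁻ strictly positive probability vectors on the unit vectors of ℤ^d with drifts d⁺ = (Σ_e ω⁺(e)e)·e₁ > 0 and −d⁻ = (Σ_e ω⁻(e)e)·e₁ < 0. Then the Kalikow-type inequality — for all f : {±e_i} → (0,1] and all s ∈ {−2d,...,2d}: π̃(+|s)/π̃(−|s) ≥ [(Σ f(e)ω⁺(e))/(Σ f(e)ω⁻(e))] · (d⁻+δ)/(d⁺−δ) — holds whenever 2h − 4βd ≥ ln((d⁻+δ)/(d⁺−δ)) + ln max_{|e|=1} ω⁺(e)/ω⁻(e). -/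
open Real Finset

/-- Single-site Ising conditional probability of spin `+1` given neighbor sum `s`. -/
noncomputable def isingPlus (β h s : ℝ) : ℝ :=
  Real.exp (β * s + h) / (Real.exp (β * s + h) + Real.exp (-(β * s + h)))

/-- Single-site Ising conditional probability of spin `-1` given neighbor sum `s`. -/
noncomputable def isingMinus (β h s : ℝ) : ℝ :=
  Real.exp (-(β * s + h)) / (Real.exp (β * s + h) + Real.exp (-(β * s + h)))

/-- `e₁`-component of the unit vector `±e_i` indexed by `(i, b) ∈ Fin d × Bool`. -/
def e1comp {d : ℕ} (e : Fin d × Bool) : ℝ :=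
  if e.1 = ⟨0, Fin.pos e.1⟩ then (if e.2 then 1 else -1) else 0

/-- Kalikow-type inequality for the Ising environment: if
`2h − 4βd ≥ ln((d⁻+δ)/(d⁺−δ)) + ln max_e ω⁺(e)/ω⁻(e)`, then for all
`f : {±e_i} → (0,1]` and all neighbor sums `s ∈ {−2d,…,2d}`,
`π̃(+|s)/π̃(−|s) ≥ [(Σ f(e)ω⁺(e))/(Σ f(e)ω⁻(e))] · (d⁻+δ)/(d⁺−δ)`. -/
theorem statement17 (d : ℕ) (hd : 1 ≤ d) (β h : ℝ) (hβ : 0 ≤ β) (hh : 0 < h)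
    (wp wm : Fin d × Bool → ℝ)
    (hwp_pos : ∀ e, 0 < wp e) (hwp_le : ∀ e, wp e ≤ 1) (hwp_sum : ∑ e, wp e = 1)
    (hwm_pos : ∀ e, 0 < wm e) (hwm_le : ∀ e, wm e ≤ 1) (hwm_sum : ∑ e, wm e = 1)
    (dplus dminus : ℝ)
    (hdp : dplus = ∑ e, wp e * e1comp e) (hdp_pos : 0 < dplus)
    (hdm : -dminus = ∑ e, wm e * e1comp e) (hdm_pos : 0 < dminus)
    (δ : ℝ) (hδ0 : 0 < δ) (hδ : δ < dplus)
    (hparam : 2 * h - 4 * β * d ≥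
      Real.log ((dminus + δ) / (dplus - δ)) +
        Real.log (Finset.univ.sup' ⟨((⟨0, hd⟩ : Fin d), true), Finset.mem_univ _⟩
          (fun e => wp e / wm e))) :
    ∀ f : Fin d × Bool → ℝ, (∀ e, 0 < f e ∧ f e ≤ 1) →
      ∀ j ∈ Finset.range (2 * d + 1),
        isingPlus β h (-(2 * d : ℝ) + 2 * j) / isingMinus β h (-(2 * d : ℝ) + 2 * j)
          ≥ ((∑ e, f e * wp e) / (∑ e, f e * wm e)) * ((dminus + δ) / (dplus - δ)) := by
  intro f hf j hj
  set ne₀ : Finset.Nonempty (Finset.univ : Finset (Fin d × Bool)) :=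
    ⟨((⟨0, hd⟩ : Fin d), true), Finset.mem_univ _⟩
  set M : ℝ := Finset.univ.sup' ⟨((⟨0, hd⟩ : Fin d), true), Finset.mem_univ _⟩
    (fun e => wp e / wm e) with hM
  have hM_pos : 0 < M := by
    have := Finset.le_sup' (fun e => wp e / wm e)
      (Finset.mem_univ ((⟨0, hd⟩ : Fin d), true))
    exact lt_of_lt_of_le (div_pos (hwp_pos _) (hwm_pos _)) this
  have hR_pos : 0 < (dminus + δ) / (dplus - δ) :=
    div_pos (by linarith) (by linarith)
  -- LHS equals exp(2(βs+h))
  set s : ℝ := -(2 * d : ℝ) + 2 * j with hs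
  have hden : 0 < Real.exp (β * s + h) + Real.exp (-(β * s + h)) :=
    add_pos (Real.exp_pos _) (Real.exp_pos _)
  have hLHS : isingPlus β h s / isingMinus β h s = Real.exp (2 * (β * s + h)) := by
    have h1 := (Real.exp_pos (β * s + h)).ne'
    have h2 := (Real.exp_pos (-(β * s + h))).ne'
    rw [isingPlus, isingMinus, div_div_div_cancel_right₀]
    · rw [← Real.exp_sub]; ring_nf
    · exact hden.ne'
  -- s ≥ -2d
  have hs_lb : -(2 * d : ℝ) ≤ s := by
    have : (0 : ℝ) ≤ 2 * j := by positivity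
    linarith [hs]
  have hexp_lb : Real.exp (2 * h - 4 * β * d) ≤ Real.exp (2 * (β * s + h)) := by
    apply Real.exp_le_exp.mpr
    nlinarith [mul_le_mul_of_nonneg_left hs_lb hβ]
  -- parameter condition: exp(2h-4βd) ≥ R * M
  have hRM : (dminus + δ) / (dplus - δ) * M ≤ Real.exp (2 * h - 4 * β * d) := by
    have hlog : Real.log ((dminus + δ) / (dplus - δ) * M) =
        Real.log ((dminus + δ) / (dplus - δ)) + Real.log M :=
      Real.log_mul (ne_of_gt hR_pos) (ne_of_gt hM_pos)
    have h1 : Real.log ((dminus + δ) / (dplus - δ) * M) ≤ 2 * h - 4 * β * d := by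
      rw [hlog]; exact hparam
    calc (dminus + δ) / (dplus - δ) * M
        = Real.exp (Real.log ((dminus + δ) / (dplus - δ) * M)) :=
          (Real.exp_log (mul_pos hR_pos hM_pos)).symm
      _ ≤ Real.exp (2 * h - 4 * β * d) := Real.exp_le_exp.mpr h1
  -- ratio of sums ≤ M
  have hsum_m : 0 < ∑ e, f e * wm e :=
    Finset.sum_pos (fun e _ => mul_pos (hf e).1 (hwm_pos e)) ne₀
  have hsum_le : ∑ e, f e * wp e ≤ M * ∑ e, f e * wm e := by
    rw [Finset.mul_sum]
    apply Finset.sum_le_sum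
    intro e _
    have hMe : wp e / wm e ≤ M := by
      rw [hM]; exact Finset.le_sup' (fun e => wp e / wm e) (Finset.mem_univ e)
    have : wp e ≤ M * wm e := by
      rw [div_le_iff₀ (hwm_pos e)] at hMe; linarith
    calc f e * wp e ≤ f e * (M * wm e) :=
          mul_le_mul_of_nonneg_left this (le_of_lt (hf e).1)
      _ = M * (f e * wm e) := by ring
  have hratio : (∑ e, f e * wp e) / (∑ e, f e * wm e) ≤ M :=
    (div_le_iff₀ hsum_m).mpr hsum_le
  have hRHS : (∑ e, f e * wp e) / (∑ e, f e * wm e) * ((dminus + δ) / (dplus - δ))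
      ≤ (dminus + δ) / (dplus - δ) * M := by
    rw [mul_comm ((dminus + δ) / (dplus - δ)) M]
    exact mul_le_mul_of_nonneg_right hratio (le_of_lt hR_pos)
  rw [hLHS]
  exact le_trans hRHS (le_trans hRM hexp_lb)
end
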